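/- arXiv:1403.2023 — 2 statements merged into one kernel-verified Lean document; each statement's English description precedes it below -/
import Mathlib

section
/- Let R be a commutative ring, p a prime, m ≥ 1, and x ∈ R with p^m · x = 0. Suppose θ : R → R satisfies θ(0) = 0 and the identity θ(p^m · x) = (p^(p·m−1) − p^(m−1)) · x^p + p^m · θ(x) holds. Then p^(m−1) · x^(p+1) = 0. -/
theorem stmt_1 (R : Type*) [CommRing R] (p : ℕ) (hp : p.Prime)
    (m : ℕ) (hm : 1 ≤ m) (x : R) (hx : (p : R) ^ m * x = 0)
    (θ : R → R) (hθ0 : θ 0 = 0)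
    (hid : θ ((p : R) ^ m * x) =
      ((p : R) ^ (p * m - 1) - (p : R) ^ (m - 1)) * x ^ p + (p : R) ^ m * θ x) :
    (p : R) ^ (m - 1) * x ^ (p + 1) = 0 := by
  rw [hx, hθ0] at hid
  have hpm : m + 1 ≤ p * m := by nlinarith [hp.two_le]
  obtain ⟨k, hk⟩ : ∃ k, p * m - 1 = k + m := ⟨p * m - 1 - m, by omega⟩
  have h1 : (p : R) ^ (p * m - 1) * x ^ (p + 1) = 0 := by
    calc (p : R) ^ (p * m - 1) * x ^ (p + 1)
        = (p : R) ^ k * x ^ p * ((p : R) ^ m * x) := by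
          rw [hk, pow_add]; ring
      _ = 0 := by rw [hx, mul_zero]
  have h2 : (p : R) ^ m * θ x * x = 0 := by
    calc (p : R) ^ m * θ x * x = θ x * ((p : R) ^ m * x) := by ring
      _ = 0 := by rw [hx, mul_zero]
  linear_combination h1 + x * hid + h2
end

section
/- Let R be a commutative ring, p a prime, and suppose there are functions Q, θ : R → R with Q additive, θ(0) = 0, and the identity θ(p^k · y) = (p^(p·k−1) − p^(k−1)) · y^p + p^k · θ(y) holding for all y ∈ R and all k ≥ 1. If x ∈ R satisfies p^m · x = 0 for some m ≥ 0, then x^((p+1)^m) = 0. -/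
theorem stmt_2 (R : Type*) [CommRing R] (p : ℕ) (hp : p.Prime)
    (Q θ : R → R) (hQ : ∀ a b : R, Q (a + b) = Q a + Q b) (hθ0 : θ 0 = 0)
    (hid : ∀ (y : R) (k : ℕ), 1 ≤ k →
      θ ((p : R) ^ k * y) =
        ((p : R) ^ (p * k - 1) - (p : R) ^ (k - 1)) * y ^ p + (p : R) ^ k * θ y)
    (x : R) (m : ℕ) (hx : (p : R) ^ m * x = 0) :
    x ^ ((p + 1) ^ m) = 0 := by
  induction m generalizing x with
  | zero => simpa using hx
  | succ n ih =>
    have hkey : (p : R) ^ n * x ^ (p + 1) = 0 := by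
      have h1 := hid x (n + 1) (by omega)
      rw [hx, hθ0] at h1
      have h2 : (0 : R) = ((p : R) ^ (p * (n + 1) - 1) - (p : R) ^ n) * x ^ (p + 1)
          + θ x * ((p : R) ^ (n + 1) * x) := by
        have := congrArg (· * x) h1
        simp only [zero_mul] at this
        rw [this]; ring_nf
        simp [pow_succ]
        ring
      rw [hx, mul_zero, add_zero] at h2
      have hge : n + 1 ≤ p * (n + 1) - 1 := by
        have h2le := hp.two_le
        have : 2 * (n + 1) ≤ p * (n + 1) := Nat.mul_le_mul_right _ h2le
        omega
      have h3 : (p : R) ^ (p * (n + 1) - 1) * x ^ (p + 1) = 0 := by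
        obtain ⟨d, hd⟩ := Nat.exists_eq_add_of_le hge
        rw [hd, pow_add]
        have : x ^ (p + 1) = x * x ^ p := by ring
        rw [this]
        calc (p:R) ^ (n+1) * (p:R) ^ d * (x * x ^ p)
            = (p:R) ^ d * x ^ p * ((p:R) ^ (n+1) * x) := by ring
          _ = 0 := by rw [hx, mul_zero]
      have h4 : (p : R) ^ n * x ^ (p + 1)
          = (p : R) ^ (p * (n + 1) - 1) * x ^ (p + 1)
            - ((p : R) ^ (p * (n + 1) - 1) - (p : R) ^ n) * x ^ (p + 1) := by ring
      rw [h4, h3, ← h2]; ring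
    have := ih (x ^ (p + 1)) hkey
    rwa [pow_succ, mul_comm, pow_mul]
end
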